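/- arXiv:2301.08608 — 2 statements merged into one kernel-verified Lean document; each statement's English description precedes it below -/
import Mathlib

section
/- Let B be a generalized Bayesian network with cutset C. If every bottom SCC of the cutset Markov chain M_{B↑C} is aperiodic, then the limit semantics Lim(B, C, γ0) is defined for every initial distribution γ0 over assignments of C (i.e., the sequence γ_n with γ_{n+1} = Next(B,C,γ_n)|_C converges for every γ0). -/
open Filter
open scoped Classical

noncomputable section

namespace GBNPaper

variable {V : Type} [Fintype V] [DecidableEq V]

/-- A distribution over a finite type: nonnegative values summing to one. -/
def IsDist {α : Type} [Fintype α] (μ : α → ℝ) : Prop :=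
  (∀ a, 0 ≤ μ a) ∧ ∑ a, μ a = 1

/-- The set of parents of a node `X` w.r.t. an edge set `E`. -/
def Pre (E : Finset (V × V)) (X : V) : Finset V :=
  (E.filter fun e => e.2 = X).image Prod.fst

/-- The set of initial (parentless) nodes. -/
def InitSet (E : Finset (V × V)) : Finset V :=
  Finset.univ.filter fun X => Pre E X = ∅

/-- Assignments over a subset `U` of the nodes. -/
abbrev Asg (U : Finset V) : Type := {x // x ∈ U} → Bool

/-- A full assignment `b` agrees with a partial assignment `d` on `U`. -/
abbrev Agrees (b : V → Bool) (U : Finset V) (d : Asg U) : Prop :=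
  ∀ x : {x // x ∈ U}, b x.1 = d x

/-- A generalized Bayesian network over node set `V`. -/
structure GBN (V : Type) [Fintype V] [DecidableEq V] where
  /-- the directed edges -/
  edges : Finset (V × V)
  /-- CPT entries: the probability of `X = T` given an assignment of the parents of `X` -/
  cpt : (X : V) → Asg (Pre edges X) → ℝ
  cpt_nonneg : ∀ X b, 0 ≤ cpt X b
  cpt_le_one : ∀ X b, cpt X b ≤ 1
  /-- the initial distribution over assignments of the initial nodes -/
  ι : Asg (InitSet edges) → ℝ
  ι_dist : IsDist ι

/-- Probability of an event (set of full assignments) under `μ`. -/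
def probIf (μ : (V → Bool) → ℝ) (p : (V → Bool) → Prop) : ℝ :=
  ∑ b : V → Bool, if p b then μ b else 0

/-- The marginal distribution of `μ` on `U`. -/
def marginal (μ : (V → Bool) → ℝ) (U : Finset V) : Asg U → ℝ :=
  fun d => probIf μ fun b => Agrees b U d

/-- `Pr(X = v | parents as given by b)`. -/
def copyProb (B : GBN V) (X : V) (v : Bool) (b : V → Bool) : ℝ :=
  if v then B.cpt X (fun p => b p.1) else 1 - B.cpt X (fun p => b p.1)

/-- The standard BN semantics (chain rule) of a GBN. -/
def distBN (B : GBN V) (b : V → Bool) : ℝ :=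
  B.ι (fun x => b x.1) *
    ∏ X ∈ Finset.univ \ InitSet B.edges, copyProb B X (b X) b

/-- The edge set contains no directed cycle. -/
def Acyclic (E : Finset (V × V)) : Prop :=
  ∀ x : V, ¬ Relation.TransGen (fun a b => (a, b) ∈ E) x x

/-- `C` is a cutset: every directed cycle contains a node of `C`. -/
def IsCutset (E : Finset (V × V)) (C : Finset V) : Prop :=
  ∀ x : V, ¬ Relation.TransGen (fun a b => (a, b) ∈ E ∧ a ∉ C ∧ b ∉ C) x x

/-- The standard BN semantics of the `C`-dissected GBN `B↑C↑γ`, as a joint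
distribution over assignments of the original nodes `V` together with
assignments of the copies `C'` of the cutset nodes. -/
def distDissect (B : GBN V) (C : Finset V) (γ : Asg C → ℝ)
    (b : V → Bool) (c : Asg C) : ℝ :=
  B.ι (fun x => b x.1) * γ (fun x => b x.1) *
    (∏ X ∈ (Finset.univ \ InitSet B.edges) \ C, copyProb B X (b X) b) *
    ∏ Y ∈ C.attach, copyProb B Y.1 (c Y) b

/-- `Next(B,C,γ)`: restrict `dist_BN(B↑C↑γ)` to `(V∖C) ∪ C'` and re-identify
the copies with the original cutset nodes. -/
def Next (B : GBN V) (C : Finset V) (γ : Asg C → ℝ) (a : V → Bool) : ℝ :=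
  ∑ b : V → Bool,
    if ∀ x : V, x ∉ C → b x = a x then distDissect B C γ b (fun y => a y.1) else 0

/-- `Extend(B,C,γ) = dist_BN(B↑C↑γ)|_V`. -/
def Extend (B : GBN V) (C : Finset V) (γ : Asg C → ℝ) (a : V → Bool) : ℝ :=
  ∑ c : Asg C, distDissect B C γ a c

/-- Dirac (point) distribution. -/
def DiracD {α : Type} [DecidableEq α] (b : α) : α → ℝ := fun c => if c = b then 1 else 0

/-- Transition matrix of the cutset Markov chain `M_{B↑C}`:
`P(b,c) = Next(B,C,Dirac(b))|_C (c)`. -/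
def cutsetP (B : GBN V) (C : Finset V) (b c : Asg C) : ℝ :=
  marginal (Next B C (DiracD b)) C c

/-- Vector-matrix multiplication `γ·P`. -/
def vecMul {α : Type} [Fintype α] (γ : α → ℝ) (P : α → α → ℝ) : α → ℝ :=
  fun c => ∑ b, γ b * P b c

/-- The transient distributions `γ0·P^n`. -/
def matIter {α : Type} [Fintype α] (P : α → α → ℝ) (γ0 : α → ℝ) : ℕ → (α → ℝ)
  | 0 => γ0
  | n + 1 => vecMul (matIter P γ0 n) P

/-- The sequence `γ_{n+1} = Next(B,C,γ_n)|_C`. -/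
def nextSeq (B : GBN V) (C : Finset V) (γ0 : Asg C → ℝ) : ℕ → (Asg C → ℝ)
  | 0 => γ0
  | n + 1 => marginal (Next B C (nextSeq B C γ0 n)) C

/-- Cesàro averages of a sequence of vectors. -/
def cesaro {α : Type} (f : ℕ → α → ℝ) (n : ℕ) : α → ℝ :=
  fun a => (∑ i ∈ Finset.range (n + 1), f i a) / (n + 1)

/-- The Markov chain semantics `[B]_{MC-C}`: image of
`γ0 ↦ Extend(B,C,lrf^{γ0})` over all initial cutset distributions `γ0`,
where `lrf^{γ0}` is the Cesàro limit of the transient distributions. -/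
def MCSem (B : GBN V) (C : Finset V) : Set ((V → Bool) → ℝ) :=
  { μ | ∃ γ0 γ, IsDist γ0 ∧
      Tendsto (cesaro (matIter (cutsetP B C) γ0)) atTop (nhds γ) ∧
      μ = Extend B C γ }

/-- The limit semantics `[B]_{Lim-C}`. -/
def LimSem (B : GBN V) (C : Finset V) : Set ((V → Bool) → ℝ) :=
  { μ | ∃ γ0 γ, IsDist γ0 ∧
      Tendsto (nextSeq B C γ0) atTop (nhds γ) ∧
      μ = Extend B C γ }

/-- The limit average semantics `[B]_{LimAvg-C}`. -/
def LimAvgSem (B : GBN V) (C : Finset V) : Set ((V → Bool) → ℝ) :=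
  { μ | ∃ γ0 γ, IsDist γ0 ∧
      Tendsto (cesaro (nextSeq B C γ0)) atTop (nhds γ) ∧
      μ = Extend B C γ }

/-- The Markov chain semantics in stationary-distribution form:
`{ Extend(B,C,γ) : γ a distribution with γ = γ·P }`. -/
def MCStatSem (B : GBN V) (C : Finset V) : Set ((V → Bool) → ℝ) :=
  { μ | ∃ γ : Asg C → ℝ, IsDist γ ∧ γ = vecMul γ (cutsetP B C) ∧ μ = Extend B C γ }

/-- Strong CPT-consistency of `μ` for node `X`. -/
def StrongCPT (B : GBN V) (μ : (V → Bool) → ℝ) (X : V) : Prop :=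
  ∀ c : Asg (Pre B.edges X),
    probIf μ (fun f => f X = true ∧ Agrees f (Pre B.edges X) c) =
      probIf μ (fun f => Agrees f (Pre B.edges X) c) * B.cpt X c

/-- Weak CPT-consistency of `μ` for node `X`. -/
def WeakCPT (B : GBN V) (μ : (V → Bool) → ℝ) (X : V) : Prop :=
  probIf μ (fun f => f X = true) =
    ∑ c : Asg (Pre B.edges X),
      probIf μ (fun f => Agrees f (Pre B.edges X) c) * B.cpt X c

/-- The CPT semantics `[B]_{Cpt}`. -/
def CptSem (B : GBN V) : Set ((V → Bool) → ℝ) :=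
  { μ | IsDist μ ∧ marginal μ (InitSet B.edges) = B.ι ∧
      ∀ X, X ∉ InitSet B.edges → StrongCPT B μ X }

/-- `(X ⊥ Y | Z) ∈ Indep(μ)`. -/
def IndepTriple (μ : (V → Bool) → ℝ) (X Y Z : Finset V) : Prop :=
  ∀ (a : Asg X) (b : Asg Y) (c : Asg Z),
    probIf μ (fun f => Agrees f Y b ∧ Agrees f Z c) = 0 ∨
    probIf μ (fun f => Agrees f X a ∧ Agrees f Y b ∧ Agrees f Z c) /
        probIf μ (fun f => Agrees f Y b ∧ Agrees f Z c) =
      probIf μ (fun f => Agrees f X a ∧ Agrees f Z c) /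
        probIf μ (fun f => Agrees f Z c)

def PairwiseDisjoint3 (X Y Z : Finset V) : Prop :=
  Disjoint X Y ∧ Disjoint X Z ∧ Disjoint Y Z

/-- `Indep(μ)` as a set of triples. -/
def IndepSet (μ : (V → Bool) → ℝ) : Set (Finset V × Finset V × Finset V) :=
  { t | PairwiseDisjoint3 t.1 t.2.1 t.2.2 ∧ IndepTriple μ t.1 t.2.1 t.2.2 }

/-- The CPT-I semantics `[B]_{Cpt-I}`. -/
def CptISem (B : GBN V) (I : Set (Finset V × Finset V × Finset V)) :
    Set ((V → Bool) → ℝ) :=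
  { μ | μ ∈ CptSem B ∧ I ⊆ IndepSet μ }

/-! d-separation -/

def Adjacent (E : Finset (V × V)) (x y : V) : Prop := (x, y) ∈ E ∨ (y, x) ∈ E

/-- Reachability along directed edges (including the node itself). -/
def Reaches (E : Finset (V × V)) (x y : V) : Prop :=
  Relation.ReflTransGen (fun a b => (a, b) ∈ E) x y

/-- An intermediate triple `a, w, b` on a path blocks it given `Z`:
either `w ∈ Z` and `w` lies in a chain or a fork, or `w` lies in a collider
and no node reachable from `w` (including `w`) is in `Z`. -/
def BlockedTriple (E : Finset (V × V)) (Z : Finset V) (a w b : V) : Prop :=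
  (w ∈ Z ∧ (((a, w) ∈ E ∧ (w, b) ∈ E) ∨ ((b, w) ∈ E ∧ (w, a) ∈ E) ∨
      ((w, a) ∈ E ∧ (w, b) ∈ E))) ∨
  ((a, w) ∈ E ∧ (b, w) ∈ E ∧ ∀ d, Reaches E w d → d ∉ Z)

/-- A path (as a list of nodes) is blocked given `Z`. -/
def Blocked (E : Finset (V × V)) (Z : Finset V) (W : List V) : Prop :=
  ∃ l₁ a w b l₂, W = l₁ ++ a :: w :: b :: l₂ ∧ BlockedTriple E Z a w b

/-- `x` and `y` are d-separated given `Z`: every undirected simple path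
from `x` to `y` is blocked given `Z`. -/
def DSepNodes (E : Finset (V × V)) (x y : V) (Z : Finset V) : Prop :=
  ∀ W : List V, W.Chain' (Adjacent E) → W.Nodup →
    W.head? = some x → W.getLast? = some y → Blocked E Z W

def DSep (E : Finset (V × V)) (X Y Z : Finset V) : Prop :=
  ∀ x ∈ X, ∀ y ∈ Y, DSepNodes E x y Z

/-- `d-sep(G)` as a set of triples of pairwise disjoint node sets. -/
def DSepSet (E : Finset (V × V)) : Set (Finset V × Finset V × Finset V) :=
  { t | PairwiseDisjoint3 t.1 t.2.1 t.2.2 ∧ DSep E t.1 t.2.1 t.2.2 }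

/-- `Close(G)`: add an edge between every ordered pair of distinct initial nodes. -/
def Close (E : Finset (V × V)) : Finset (V × V) :=
  E ∪ ((InitSet E ×ˢ InitSet E).filter fun p => p.1 ≠ p.2)

/-- `G[C]`: remove all edges into nodes of `C` (so the nodes of `C` are initial). -/
def CutGraph (E : Finset (V × V)) (C : Finset V) : Finset (V × V) :=
  E.filter fun e => e.2 ∉ C

/-- `ι` is a product distribution: it factorizes into its single-node marginals,
i.e. the initial nodes are mutually independent under `ι`. -/
def IsProductDist {U : Finset V} (ι : Asg U → ℝ) : Prop :=
  ∀ b : Asg U,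
    ι b = ∏ x : {x // x ∈ U}, ∑ b' : Asg U, if b' x = b x then ι b' else 0

/-! Markov chain notions -/

/-- Reachability in the underlying graph of a DTMC. -/
def MCReach {α : Type} (P : α → α → ℝ) (x y : α) : Prop :=
  Relation.ReflTransGen (fun a b => 0 < P a b) x y

/-- Bottom strongly connected component of a DTMC: nonempty, closed under
reachability, and strongly connected. -/
def IsBSCC {α : Type} (P : α → α → ℝ) (D : Set α) : Prop :=
  D.Nonempty ∧ (∀ x ∈ D, ∀ y, MCReach P x y → y ∈ D) ∧
    ∀ x ∈ D, ∀ y ∈ D, MCReach P x y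

/-- Walks of a given length along positive-probability transitions. -/
def walkLen {α : Type} (P : α → α → ℝ) : ℕ → α → α → Prop
  | 0, x, y => x = y
  | n + 1, x, y => ∃ z, 0 < P x z ∧ walkLen P n z y

/-- The lengths of the cycles of `D`. -/
def CycleLens {α : Type} (P : α → α → ℝ) (D : Set α) : Set ℕ :=
  { n | 0 < n ∧ ∃ x ∈ D, walkLen P n x x }

/-- `D` is aperiodic: the gcd of the lengths of its cycles equals 1. -/
def AperiodicBSCC {α : Type} (P : α → α → ℝ) (D : Set α) : Prop :=
  ∀ d : ℕ, (∀ n ∈ CycleLens P D, d ∣ n) → d = 1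

/-- `D` is periodic: the gcd of the lengths of its cycles is greater than 1. -/
def PeriodicBSCC {α : Type} (P : α → α → ℝ) (D : Set α) : Prop :=
  ∃ d : ℕ, 1 < d ∧ ∀ n ∈ CycleLens P D, d ∣ n

/-- A GBN is smooth if all CPT entries and all values of `ι` lie in `(0,1)`. -/
def Smooth (B : GBN V) : Prop :=
  (∀ X b, B.cpt X b ∈ Set.Ioo (0 : ℝ) 1) ∧ ∀ d, B.ι d ∈ Set.Ioo (0 : ℝ) 1

/-!
`γₙ = γ₀ Pⁿ` for the transition matrix `P` of the cutset chain, because `Next` is linear in `γ`.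
The rows of `P` have mass at most one: outside the cutset the dissected network is acyclic, so
its CPT factors sum out to one, sink first (mass is lost only where the initial distribution
and the Dirac start overlap on initial cutset nodes). It remains to show that every entry of
`Pⁿ` converges. Mass outside the BSCCs, and mass in a BSCC that leaks, decays geometrically.
In a BSCC `D` that keeps its mass, the return times to a state form an additive monoid of gcd
one, hence contain all large integers, so some power `P^N` has all entries on `D` at least
`ε > 0`; then `N` steps shrink the oscillation of a column over `D` by the factor `1 - |D| ε`
(Doeblin). From a transient state, `Pⁿ` is a mixture of rows from BSCCs up to the decaying
transient mass.
-/

open scoped Topology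

section Walks

variable {α : Type} {P : α → α → ℝ}

theorem walkLen_add {m n : ℕ} {x y z : α} (h₁ : walkLen P m x y) (h₂ : walkLen P n y z) :
    walkLen P (m + n) x z := by
  induction m generalizing x with
  | zero => obtain rfl : x = y := h₁; simpa using h₂
  | succ m ih =>
    obtain ⟨w, hxw, hw⟩ := h₁
    rw [Nat.add_right_comm]
    exact ⟨w, hxw, ih hw⟩

theorem mcReach_iff_exists_walkLen {x y : α} : MCReach P x y ↔ ∃ n, walkLen P n x y := by
  constructor
  · intro h
    induction h with
    | refl => exact ⟨0, rfl⟩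
    | tail _ hbc ih =>
      obtain ⟨n, hn⟩ := ih
      exact ⟨n + 1, walkLen_add hn ⟨_, hbc, rfl⟩⟩
  · rintro ⟨n, hn⟩
    induction n generalizing x with
    | zero => obtain rfl : x = y := hn; exact .refl
    | succ n ih =>
      obtain ⟨z, hxz, hz⟩ := hn
      exact .head hxz (ih hz)

theorem eventually_walkLen_self_of_aperiodic {D : Set α} (hD : IsBSCC P D)
    (hap : AperiodicBSCC P D) {x₀ : α} (hx₀ : x₀ ∈ D) :
    ∀ᶠ n in atTop, walkLen P n x₀ x₀ := by
  set s : Set ℕ := {n | walkLen P n x₀ x₀}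
  have hgcd : Nat.setGcd s = 1 := by
    refine hap _ ?_
    rintro n ⟨-, x, hx, hn⟩
    obtain ⟨a, ha⟩ := mcReach_iff_exists_walkLen.1 (hD.2.2 x₀ hx₀ x hx)
    obtain ⟨b, hb⟩ := mcReach_iff_exists_walkLen.1 (hD.2.2 x hx x₀ hx₀)
    have hab := Nat.setGcd_dvd_of_mem (s := s) (walkLen_add ha hb)
    have hanb := Nat.setGcd_dvd_of_mem (s := s) (walkLen_add (walkLen_add ha hn) hb)
    rw [Nat.add_right_comm] at hanb
    exact (Nat.dvd_add_right hab).1 hanb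
  obtain ⟨N, hN⟩ := Nat.exists_mem_closure_of_ge s
  filter_upwards [eventually_ge_atTop N] with n hn
  have hmem := hN n hn (hgcd ▸ one_dvd n)
  clear hn
  induction hmem using AddSubmonoid.closure_induction with
  | mem m hm => exact hm
  | zero => rfl
  | add m k _ _ hm hk => exact walkLen_add hm hk

variable [Fintype α]

theorem exists_isBSCC_mcReach (P : α → α → ℝ) (x : α) :
    ∃ D : Set α, IsBSCC P D ∧ ∃ y ∈ D, MCReach P x y := by
  let reachSet : α → Finset α := fun y => Finset.univ.filter (MCReach P y)
  have mem_reachSet : ∀ y z, z ∈ reachSet y ↔ MCReach P y z := by simp [reachSet]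
  obtain ⟨y, hxy, hmin⟩ := (reachSet x).exists_min_image (fun y => (reachSet y).card)
    ⟨x, (mem_reachSet x x).2 .refl⟩
  rw [mem_reachSet] at hxy
  have hback : ∀ z, MCReach P y z → MCReach P z y := fun z hyz => by
    have hsub : reachSet z ⊆ reachSet y := fun w hw =>
      (mem_reachSet y w).2 (hyz.trans ((mem_reachSet z w).1 hw))
    have heq := Finset.eq_of_subset_of_card_le hsub
      (hmin z ((mem_reachSet x z).2 (hxy.trans hyz)))
    exact (mem_reachSet z y).1 (heq ▸ (mem_reachSet y y).2 .refl)
  refine ⟨{z | MCReach P y z}, ⟨⟨y, .refl⟩, fun a ha w hw => ha.trans hw,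
    fun a ha w hw => (hback a ha).trans hw⟩, y, .refl, hxy⟩

theorem eventually_walkLen_of_aperiodic {D : Set α} (hD : IsBSCC P D)
    (hap : AperiodicBSCC P D) : ∀ᶠ n in atTop, ∀ x ∈ D, ∀ y ∈ D, walkLen P n x y := by
  obtain ⟨x₀, hx₀⟩ := hD.1
  have hloop := eventually_walkLen_self_of_aperiodic hD hap hx₀
  refine eventually_all.2 fun x => eventually_imp_distrib_left.2 fun hx =>
    eventually_all.2 fun y => eventually_imp_distrib_left.2 fun hy => ?_
  obtain ⟨a, ha⟩ := mcReach_iff_exists_walkLen.1 (hD.2.2 x hx x₀ hx₀)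
  obtain ⟨b, hb⟩ := mcReach_iff_exists_walkLen.1 (hD.2.2 x₀ hx₀ y hy)
  filter_upwards [(tendsto_sub_atTop_nat (a + b)).eventually hloop,
    eventually_ge_atTop (a + b)] with n hn hab
  have hwalk := walkLen_add ha (walkLen_add hn hb)
  rwa [show a + (n - (a + b) + b) = n by omega] at hwalk

end Walks

section Estimates

theorem tendsto_nhds_zero_of_add_le_mul {u : ℕ → ℝ} {c : ℝ} {L : ℕ} (hL : L ≠ 0)
    (hc₀ : 0 ≤ c) (hc₁ : c < 1) (hu₀ : ∀ n, 0 ≤ u n) (hu₁ : ∀ n, u n ≤ 1)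
    (hu : ∀ n, u (n + L) ≤ c * u n) : Tendsto u atTop (𝓝 0) := by
  have hbound : ∀ n, u n ≤ c ^ (n / L) := by
    intro n
    induction n using Nat.strong_induction_on with
    | _ n ih =>
      rcases lt_or_ge n L with h | h
      · simpa [Nat.div_eq_of_lt h] using hu₁ n
      · obtain ⟨m, rfl⟩ := Nat.exists_eq_add_of_le' h
        calc u (m + L) ≤ c * u m := hu m
          _ ≤ c * c ^ (m / L) := mul_le_mul_of_nonneg_left (ih m (by omega)) hc₀
          _ = c ^ ((m + L) / L) := by
            rw [Nat.add_div_right _ (Nat.pos_of_ne_zero hL), pow_succ']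
  exact squeeze_zero hu₀ hbound
    ((tendsto_pow_atTop_nhds_zero_of_lt_one hc₀ hc₁).comp (Nat.tendsto_div_const_atTop hL))

theorem sum_mul_sub_sum_mul_le {ι : Type*} {s : Finset ι} {p q f : ι → ℝ} {ε δ : ℝ}
    (hp : ∀ i ∈ s, ε ≤ p i) (hq : ∀ i ∈ s, ε ≤ q i) (hp₁ : ∑ i ∈ s, p i = 1)
    (hq₁ : ∑ i ∈ s, q i = 1) (hf : ∀ i ∈ s, ∀ j ∈ s, f i - f j ≤ δ) :
    ∑ i ∈ s, p i * f i - ∑ i ∈ s, q i * f i ≤ (1 - s.card * ε) * δ := by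
  have hne : s.Nonempty := Finset.nonempty_of_sum_ne_zero (by rw [hp₁]; exact one_ne_zero)
  obtain ⟨i₁, hi₁, hmax⟩ := s.exists_max_image f hne
  obtain ⟨i₀, hi₀, hmin⟩ := s.exists_min_image f hne
  have hθ : ∀ r : ι → ℝ, ∑ i ∈ s, r i = 1 → ∑ i ∈ s, (r i - ε) = 1 - s.card * ε :=
    fun r hr => by
    rw [Finset.sum_sub_distrib, hr, Finset.sum_const, nsmul_eq_mul]
  calc ∑ i ∈ s, p i * f i - ∑ i ∈ s, q i * f i
      = ∑ i ∈ s, (p i - ε) * f i - ∑ i ∈ s, (q i - ε) * f i := by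
        simp only [sub_mul, Finset.sum_sub_distrib]; ring
    _ ≤ ∑ i ∈ s, (p i - ε) * f i₁ - ∑ i ∈ s, (q i - ε) * f i₀ := by
        gcongr with i hi i hi
        · exact sub_nonneg.2 (hp i hi)
        · exact hmax i hi
        · exact sub_nonneg.2 (hq i hi)
        · exact hmin i hi
    _ = (1 - s.card * ε) * (f i₁ - f i₀) := by
        rw [← Finset.sum_mul, ← Finset.sum_mul, hθ p hp₁, hθ q hq₁]; ring
    _ ≤ (1 - s.card * ε) * δ := mul_le_mul_of_nonneg_left (hf i₁ hi₁ i₀ hi₀)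
        (hθ p hp₁ ▸ Finset.sum_nonneg fun i hi => sub_nonneg.2 (hp i hi))

end Estimates

section MarkovChain

variable {α : Type} [Fintype α]

structure IsSubstochastic (P : Matrix α α ℝ) : Prop where
  nonneg : ∀ x y, 0 ≤ P x y
  sum_le_one : ∀ x, ∑ y, P x y ≤ 1

namespace IsSubstochastic

variable {P Q : Matrix α α ℝ}

theorem mul (hP : IsSubstochastic P) (hQ : IsSubstochastic Q) : IsSubstochastic (P * Q) where
  nonneg x y := Finset.sum_nonneg fun z _ => mul_nonneg (hP.nonneg x z) (hQ.nonneg z y)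
  sum_le_one x := calc
    ∑ y, (P * Q) x y = ∑ z, P x z * ∑ y, Q z y := by
      simp only [Matrix.mul_apply, Finset.mul_sum]; exact Finset.sum_comm
    _ ≤ ∑ z, P x z := Finset.sum_le_sum fun z _ =>
      mul_le_of_le_one_right (hP.nonneg x z) (hQ.sum_le_one z)
    _ ≤ 1 := hP.sum_le_one x

theorem finset_sum_le_one (hP : IsSubstochastic P) (S : Finset α) (x : α) :
    ∑ y ∈ S, P x y ≤ 1 :=
  (Finset.sum_le_sum_of_subset_of_nonneg (Finset.subset_univ S) fun y _ _ => hP.nonneg x y).trans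
    (hP.sum_le_one x)

theorem le_one (hP : IsSubstochastic P) (x y : α) : P x y ≤ 1 := by
  simpa using hP.finset_sum_le_one {y} x

variable [DecidableEq α]

theorem one : IsSubstochastic (1 : Matrix α α ℝ) where
  nonneg x y := by rw [Matrix.one_apply]; split_ifs <;> norm_num
  sum_le_one x := by simp [Matrix.one_apply]

theorem pow (hP : IsSubstochastic P) (n : ℕ) : IsSubstochastic (P ^ n) := by
  induction n with
  | zero => exact one
  | succ n ih => rw [pow_succ]; exact ih.mul hP

end IsSubstochastic

variable [DecidableEq α] {P : Matrix α α ℝ}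

theorem pow_add_apply (m n : ℕ) (x y : α) :
    (P ^ (m + n)) x y = ∑ z, (P ^ m) x z * (P ^ n) z y := by
  rw [pow_add, Matrix.mul_apply]

theorem pow_apply_pos_iff_walkLen (hP : ∀ x y, 0 ≤ P x y) (n : ℕ) (x y : α) :
    0 < (P ^ n) x y ↔ walkLen P n x y := by
  induction n generalizing x with
  | zero => by_cases h : x = y <;> simp [walkLen, h]
  | succ n ih =>
    rw [pow_succ', Matrix.mul_apply, Finset.sum_pos_iff_of_nonneg fun z _ =>
      mul_nonneg (hP x z) (Matrix.pow_apply_nonneg hP n z y)]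
    simp only [Finset.mem_univ, true_and, walkLen, ← ih]
    exact exists_congr fun z => mul_pos_iff.trans (or_iff_left fun h => (hP x z).not_gt h.1)

theorem mcReach_of_pow_apply_ne_zero (hP : ∀ x y, 0 ≤ P x y) {n : ℕ} {x y : α}
    (h : (P ^ n) x y ≠ 0) : MCReach P x y :=
  mcReach_iff_exists_walkLen.2 ⟨n, (pow_apply_pos_iff_walkLen hP n x y).1
    ((Matrix.pow_apply_nonneg hP n x y).lt_of_ne' h)⟩

theorem pow_apply_eq_zero_of_not_mcReach (hP : ∀ x y, 0 ≤ P x y) {x y : α}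
    (h : ¬ MCReach P x y) (n : ℕ) : (P ^ n) x y = 0 :=
  by_contra fun h' => h (mcReach_of_pow_apply_ne_zero hP h')

theorem exists_sum_pow_apply_lt_one_of_mcReach (hP : IsSubstochastic P) (S : Finset α)
    {x z : α} (hxz : MCReach P x z) {k : ℕ} (hz : ∑ w ∈ S, (P ^ k) z w < 1) :
    ∃ n, ∑ w ∈ S, (P ^ n) x w < 1 := by
  obtain ⟨a, ha⟩ := mcReach_iff_exists_walkLen.1 hxz
  have hxz_pos := (pow_apply_pos_iff_walkLen hP.nonneg a x z).2 ha
  set m : α → ℝ := fun v => ∑ w ∈ S, (P ^ k) v w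
  have hloss : ∑ w ∈ S, (P ^ (a + k)) x w =
      ∑ v, (P ^ a) x v - ∑ v, (P ^ a) x v * (1 - m v) := by
    simp only [pow_add_apply, m, mul_sub, mul_one, Finset.sum_sub_distrib, sub_sub_cancel,
      Finset.mul_sum]
    exact Finset.sum_comm
  have hloss_z : (P ^ a) x z * (1 - m z) ≤ ∑ v, (P ^ a) x v * (1 - m v) :=
    Finset.single_le_sum (fun v _ => mul_nonneg ((hP.pow a).nonneg x v)
      (sub_nonneg.2 ((hP.pow k).finset_sum_le_one S v))) (Finset.mem_univ z)
  have hpos : 0 < (P ^ a) x z * (1 - m z) := mul_pos hxz_pos (sub_pos.2 hz)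
  exact ⟨a + k, by linarith [(hP.pow a).sum_le_one x]⟩

theorem tendsto_sum_pow_apply_zero (hP : IsSubstochastic P) {S : Finset α}
    (hS : ∀ x ∈ S, ∀ y ∈ S, ∀ z, MCReach P x z → MCReach P z y → z ∈ S)
    (hleak : ∀ x ∈ S, ∃ k, ∑ y ∈ S, (P ^ k) x y < 1) {x : α} (hx : x ∈ S) :
    Tendsto (fun n => ∑ y ∈ S, (P ^ n) x y) atTop (𝓝 0) := by
  set u : ℕ → α → ℝ := fun n x => ∑ y ∈ S, (P ^ n) x y
  have hu₀ : ∀ n x, 0 ≤ u n x := fun n x =>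
    Finset.sum_nonneg fun y _ => (hP.pow n).nonneg x y
  have hu₁ : ∀ n x, u n x ≤ 1 := fun n => (hP.pow n).finset_sum_le_one S
  -- mass that has left `S` never comes back
  have hsplit : ∀ m n, ∀ x ∈ S, u (m + n) x = ∑ z ∈ S, (P ^ m) x z * u n z := by
    intro m n x hx
    simp only [u, pow_add_apply, Finset.mul_sum]
    rw [Finset.sum_comm]
    refine (Finset.sum_subset (Finset.subset_univ S) fun z _ hz =>
      Finset.sum_eq_zero fun y hy => ?_).symm
    by_contra h
    obtain ⟨hxz, hzy⟩ := mul_ne_zero_iff.1 h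
    exact hz (hS x hx y hy z (mcReach_of_pow_apply_ne_zero hP.nonneg hxz)
      (mcReach_of_pow_apply_ne_zero hP.nonneg hzy))
  have hanti : ∀ m n, ∀ x ∈ S, u (m + n) x ≤ u m x := fun m n x hx => by
    rw [hsplit m n x hx]
    exact Finset.sum_le_sum fun z _ =>
      mul_le_of_le_one_right ((hP.pow m).nonneg x z) (hu₁ n z)
  choose! k hk using hleak
  set L := S.sup k + 1
  have hL : ∀ x ∈ S, u L x < 1 := fun x hx => by
    obtain ⟨j, hj⟩ := Nat.exists_eq_add_of_le ((Finset.le_sup hx).trans (Nat.le_succ _))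
    exact (hj ▸ hanti (k x) j x hx).trans_lt (hk x hx)
  have hne : S.Nonempty := ⟨x, hx⟩
  set U : ℕ → ℝ := fun n => S.sup' hne (u n)
  have hxU : ∀ n, u n x ≤ U n := fun n => Finset.le_sup' (u n) hx
  have hU₀ : ∀ n, 0 ≤ U n := fun n => (hu₀ n x).trans (hxU n)
  have hstep : ∀ n, U (n + L) ≤ U L * U n := fun n => Finset.sup'_le _ _ fun z hz => by
    rw [add_comm, hsplit L n z hz]
    calc ∑ w ∈ S, (P ^ L) z w * u n w ≤ ∑ w ∈ S, (P ^ L) z w * U n :=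
          Finset.sum_le_sum fun w hw =>
            mul_le_mul_of_nonneg_left (Finset.le_sup' (u n) hw) ((hP.pow L).nonneg z w)
      _ = u L z * U n := by rw [← Finset.sum_mul]
      _ ≤ U L * U n := mul_le_mul_of_nonneg_right (Finset.le_sup' (u L) hz) (hU₀ n)
  exact squeeze_zero (fun n => hu₀ n x) hxU
    (tendsto_nhds_zero_of_add_le_mul (Nat.succ_ne_zero _) (hU₀ L) ((Finset.sup'_lt_iff hne).2 hL)
      hU₀ (fun n => Finset.sup'_le _ _ fun z _ => hu₁ n z) hstep)

theorem IsBSCC.pow_add_apply_eq_sum (hP : ∀ x y, 0 ≤ P x y) {D : Set α} (hD : IsBSCC P D)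
    {z : α} (hz : z ∈ D) (m n : ℕ) (y : α) :
    (P ^ (m + n)) z y = ∑ w ∈ D.toFinset, (P ^ m) z w * (P ^ n) w y := by
  rw [pow_add_apply]
  refine (Finset.sum_subset (Finset.subset_univ _) fun w _ hw => ?_).symm
  rw [pow_apply_eq_zero_of_not_mcReach hP (fun h => hw (Set.mem_toFinset.2 (hD.2.1 z hz w h))),
    zero_mul]

theorem IsBSCC.sum_pow_apply_eq_one (hP : ∀ x y, 0 ≤ P x y) {D : Set α} (hD : IsBSCC P D)
    (hstoch : ∀ z ∈ D, ∑ w, P z w = 1) (n : ℕ) {z : α} (hz : z ∈ D) :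
    ∑ w ∈ D.toFinset, (P ^ n) z w = 1 := by
  induction n generalizing z with
  | zero => simp [Matrix.one_apply, hz]
  | succ n ih =>
    have hrow : ∀ w ∈ D.toFinset, ∑ v ∈ D.toFinset, P w v = 1 := fun w hw => by
      rw [Set.mem_toFinset] at hw
      rw [← hstoch w hw]
      refine Finset.sum_subset (Finset.subset_univ _) fun v _ hv => ?_
      simpa using pow_apply_eq_zero_of_not_mcReach hP
        (fun h => hv (Set.mem_toFinset.2 (hD.2.1 w hw v h))) 1
    simp only [hD.pow_add_apply_eq_sum hP hz n 1, pow_one]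
    rw [Finset.sum_comm]
    simp only [← Finset.mul_sum]
    rw [Finset.sum_congr rfl fun w hw => by rw [hrow w hw, mul_one], ih hz]

theorem IsBSCC.abs_pow_add_apply_sub_le (hP : ∀ x y, 0 ≤ P x y) {D : Set α} (hD : IsBSCC P D)
    (hstoch : ∀ z ∈ D, ∑ w, P z w = 1) {z : α} (hz : z ∈ D) {n : ℕ} {y : α} {δ : ℝ}
    (hδ : ∀ w ∈ D, |(P ^ n) w y - (P ^ n) z y| ≤ δ) (k : ℕ) :
    |(P ^ (k + n)) z y - (P ^ n) z y| ≤ δ := by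
  have hmean : (P ^ (k + n)) z y - (P ^ n) z y =
      ∑ w ∈ D.toFinset, (P ^ k) z w * ((P ^ n) w y - (P ^ n) z y) := by
    rw [hD.pow_add_apply_eq_sum hP hz, Finset.sum_congr rfl fun w _ => mul_sub _ _ _,
      Finset.sum_sub_distrib, ← Finset.sum_mul, hD.sum_pow_apply_eq_one hP hstoch k hz, one_mul]
  rw [hmean]
  calc |∑ w ∈ D.toFinset, (P ^ k) z w * ((P ^ n) w y - (P ^ n) z y)|
      ≤ ∑ w ∈ D.toFinset, (P ^ k) z w * δ := by
        refine (Finset.abs_sum_le_sum_abs _ _).trans (Finset.sum_le_sum fun w hw => ?_)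
        rw [abs_mul, abs_of_nonneg (Matrix.pow_apply_nonneg hP k z w)]
        exact mul_le_mul_of_nonneg_left (hδ w (Set.mem_toFinset.1 hw))
          (Matrix.pow_apply_nonneg hP k z w)
    _ = δ := by rw [← Finset.sum_mul, hD.sum_pow_apply_eq_one hP hstoch k hz, one_mul]

theorem IsBSCC.exists_le_pow_apply (hP : ∀ x y, 0 ≤ P x y) {D : Set α} (hD : IsBSCC P D)
    (hap : AperiodicBSCC P D) :
    ∃ N ≠ 0, ∃ ε > 0, ∀ x ∈ D, ∀ y ∈ D, ε ≤ (P ^ N) x y := by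
  obtain ⟨N, hwalk, hN⟩ :=
    ((eventually_walkLen_of_aperiodic hD hap).and (eventually_ge_atTop 1)).exists
  obtain ⟨x₀, hx₀⟩ := hD.1
  have hne : (D.toFinset ×ˢ D.toFinset).Nonempty := ⟨(x₀, x₀), by simp [hx₀]⟩
  refine ⟨N, by omega, (D.toFinset ×ˢ D.toFinset).inf' hne fun p => (P ^ N) p.1 p.2,
    (Finset.lt_inf'_iff hne).2 fun p hp => ?_, fun x hx y hy => ?_⟩
  · rw [Finset.mem_product, Set.mem_toFinset, Set.mem_toFinset] at hp
    exact (pow_apply_pos_iff_walkLen hP N _ _).2 (hwalk _ hp.1 _ hp.2)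
  · exact Finset.inf'_le (f := fun p : α × α => (P ^ N) p.1 p.2) (b := (x, y))
      (Finset.mem_product.2 ⟨Set.mem_toFinset.2 hx, Set.mem_toFinset.2 hy⟩)

theorem cauchySeq_pow_apply_of_stochastic (hP : IsSubstochastic P) {D : Set α}
    (hD : IsBSCC P D) (hap : AperiodicBSCC P D) (hstoch : ∀ z ∈ D, ∑ w, P z w = 1)
    {z : α} (hz : z ∈ D) (y : α) : CauchySeq fun n => (P ^ n) z y := by
  set S := D.toFinset
  have hzS : z ∈ S := Set.mem_toFinset.2 hz
  have hSS : (S ×ˢ S).Nonempty := ⟨(z, z), Finset.mem_product.2 ⟨hzS, hzS⟩⟩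
  set e : ℕ → ℝ := fun n => (S ×ˢ S).sup' hSS fun p => (P ^ n) p.1 y - (P ^ n) p.2 y
  have he : ∀ n, ∀ w ∈ S, ∀ w' ∈ S, (P ^ n) w y - (P ^ n) w' y ≤ e n :=
    fun n w hw w' hw' =>
    Finset.le_sup' (fun p : α × α => (P ^ n) p.1 y - (P ^ n) p.2 y) (b := (w, w'))
      (Finset.mem_product.2 ⟨hw, hw'⟩)
  have he₀ : ∀ n, 0 ≤ e n := fun n => by simpa using he n z hzS z hzS
  have he₁ : ∀ n, e n ≤ 1 := fun n => Finset.sup'_le _ _ fun p _ => by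
    linarith [(hP.pow n).le_one p.1 y, (hP.pow n).nonneg p.2 y]
  obtain ⟨N, hN, ε, hε, hεle⟩ := hD.exists_le_pow_apply hP.nonneg hap
  have hcard : (1 : ℝ) ≤ S.card := by exact_mod_cast Finset.card_pos.2 ⟨z, hzS⟩
  have hθ₀ : 0 ≤ 1 - S.card * ε := by
    have := Finset.sum_le_sum fun w (hw : w ∈ S) => hεle z hz w (Set.mem_toFinset.1 hw)
    rw [hD.sum_pow_apply_eq_one hP.nonneg hstoch N hz, Finset.sum_const, nsmul_eq_mul] at this
    linarith
  have hθ₁ : 1 - S.card * ε < 1 := by nlinarith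
  have hcontract : ∀ n, e (n + N) ≤ (1 - S.card * ε) * e n := fun n =>
    Finset.sup'_le _ _ fun p hp => by
      obtain ⟨hp₁, hp₂⟩ := Finset.mem_product.1 hp
      rw [add_comm, hD.pow_add_apply_eq_sum hP.nonneg (Set.mem_toFinset.1 hp₁),
        hD.pow_add_apply_eq_sum hP.nonneg (Set.mem_toFinset.1 hp₂)]
      exact sum_mul_sub_sum_mul_le
        (fun w hw => hεle _ (Set.mem_toFinset.1 hp₁) w (Set.mem_toFinset.1 hw))
        (fun w hw => hεle _ (Set.mem_toFinset.1 hp₂) w (Set.mem_toFinset.1 hw))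
        (hD.sum_pow_apply_eq_one hP.nonneg hstoch N (Set.mem_toFinset.1 hp₁))
        (hD.sum_pow_apply_eq_one hP.nonneg hstoch N (Set.mem_toFinset.1 hp₂)) (he n)
  refine cauchySeq_of_le_tendsto_0' e (fun n m hnm => ?_)
    (tendsto_nhds_zero_of_add_le_mul hN (by linarith [hθ₁]) hθ₁ he₀ he₁ hcontract)
  obtain ⟨k, rfl⟩ := Nat.exists_eq_add_of_le' hnm
  rw [dist_comm, Real.dist_eq]
  exact hD.abs_pow_add_apply_sub_le hP.nonneg hstoch hz (fun w hw => abs_sub_le_iff.2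
    ⟨he n w (Set.mem_toFinset.2 hw) z hzS, he n z hzS w (Set.mem_toFinset.2 hw)⟩) k

theorem cauchySeq_pow_apply_of_mem_bscc (hP : IsSubstochastic P) {D : Set α}
    (hD : IsBSCC P D) (hap : AperiodicBSCC P D) {z : α} (hz : z ∈ D) (y : α) :
    CauchySeq fun n => (P ^ n) z y := by
  by_cases hstoch : ∀ w ∈ D, ∑ v, P w v = 1
  · exact cauchySeq_pow_apply_of_stochastic hP hD hap hstoch hz y
  push Not at hstoch
  obtain ⟨z₀, hz₀, hleak₀⟩ := hstoch
  have hmass : Tendsto (fun n => ∑ w ∈ D.toFinset, (P ^ n) z w) atTop (𝓝 0) := by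
    refine tendsto_sum_pow_apply_zero hP (fun x hx _ _ w hxw _ => ?_) (fun x hx => ?_)
      (Set.mem_toFinset.2 hz)
    · exact Set.mem_toFinset.2 (hD.2.1 x (Set.mem_toFinset.1 hx) w hxw)
    · refine exists_sum_pow_apply_lt_one_of_mcReach hP _
        (hD.2.2 x (Set.mem_toFinset.1 hx) z₀ hz₀) (k := 1) ?_
      rw [pow_one]
      exact (Finset.sum_le_sum_of_subset_of_nonneg (Finset.subset_univ _) fun v _ _ =>
        hP.nonneg z₀ v).trans_lt ((hP.sum_le_one z₀).lt_of_ne hleak₀)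
  refine (squeeze_zero (fun n => (hP.pow n).nonneg z y) (fun n => ?_) hmass).cauchySeq
  by_cases hy : y ∈ D
  · exact Finset.single_le_sum (fun w _ => (hP.pow n).nonneg z w) (Set.mem_toFinset.2 hy)
  · rw [pow_apply_eq_zero_of_not_mcReach hP.nonneg fun h => hy (hD.2.1 z hz y h)]
    exact Finset.sum_nonneg fun w _ => (hP.pow n).nonneg z w

theorem cauchySeq_pow_apply_of_tendsto_sum_compl (hP : IsSubstochastic P) (R : Finset α)
    {x y : α} (hR : ∀ z ∈ R, CauchySeq fun n => (P ^ n) z y)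
    (hx : Tendsto (fun n => ∑ z ∈ Rᶜ, (P ^ n) x z) atTop (𝓝 0)) :
    CauchySeq fun n => (P ^ n) x y := by
  rw [Metric.cauchySeq_iff]
  intro ε hε
  obtain ⟨m, hm⟩ := (hx.eventually (gt_mem_nhds (half_pos hε))).exists
  obtain ⟨N, hN⟩ := eventually_atTop_prod_self'.1 <| (eventually_all_finset R).2 fun z hz =>
    (cauchySeq_iff_tendsto_dist_atTop_0.1 (hR z hz)).eventually (gt_mem_nhds (half_pos hε))
  refine ⟨m + N, fun n hn n' hn' => ?_⟩
  obtain ⟨k, rfl⟩ := Nat.exists_eq_add_of_le (le_of_add_le_left hn)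
  obtain ⟨k', rfl⟩ := Nat.exists_eq_add_of_le (le_of_add_le_left hn')
  have hk : N ≤ k := by omega
  have hk' : N ≤ k' := by omega
  have hdist : ∀ z, |(P ^ k) z y - (P ^ k') z y| ≤ 1 := fun z =>
    abs_sub_le_iff.2 ⟨by linarith [(hP.pow k).le_one z y, (hP.pow k').nonneg z y],
      by linarith [(hP.pow k').le_one z y, (hP.pow k).nonneg z y]⟩
  rw [Real.dist_eq, pow_add_apply, pow_add_apply, ← Finset.sum_sub_distrib]
  calc |∑ z, ((P ^ m) x z * (P ^ k) z y - (P ^ m) x z * (P ^ k') z y)|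
      ≤ ∑ z, (P ^ m) x z * |(P ^ k) z y - (P ^ k') z y| := by
        refine (Finset.abs_sum_le_sum_abs _ _).trans (le_of_eq (Finset.sum_congr rfl fun z _ => ?_))
        rw [← mul_sub, abs_mul, abs_of_nonneg ((hP.pow m).nonneg x z)]
    _ = ∑ z ∈ R, (P ^ m) x z * |(P ^ k) z y - (P ^ k') z y| +
          ∑ z ∈ Rᶜ, (P ^ m) x z * |(P ^ k) z y - (P ^ k') z y| :=
        (Finset.sum_add_sum_compl R _).symm
    _ ≤ ∑ z ∈ R, (P ^ m) x z * (ε / 2) + ∑ z ∈ Rᶜ, (P ^ m) x z * 1 := by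
        gcongr with z hz z
        · exact (hP.pow m).nonneg x z
        · rw [← Real.dist_eq]; exact (hN k hk k' hk' z hz).le
        · exact (hP.pow m).nonneg x z
        · exact hdist z
    _ < ε := by
        rw [← Finset.sum_mul, ← Finset.sum_mul, mul_one]
        nlinarith [(hP.pow m).finset_sum_le_one R x, Finset.sum_nonneg fun z (_ : z ∈ R) =>
          (hP.pow m).nonneg x z]

theorem cauchySeq_pow_apply_of_aperiodic (hP : IsSubstochastic P)
    (hap : ∀ D : Set α, IsBSCC P D → AperiodicBSCC P D) (x y : α) :
    CauchySeq fun n => (P ^ n) x y := by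
  set R := Finset.univ.filter fun z => ∃ D, IsBSCC P D ∧ z ∈ D
  have hR : ∀ z ∈ R, CauchySeq fun n => (P ^ n) z y := fun z hz => by
    obtain ⟨D, hD, hzD⟩ := (Finset.mem_filter.1 hz).2
    exact cauchySeq_pow_apply_of_mem_bscc hP hD (hap D hD) hzD y
  by_cases hx : x ∈ R
  · exact hR x hx
  refine cauchySeq_pow_apply_of_tendsto_sum_compl hP R hR
    (tendsto_sum_pow_apply_zero hP (fun x' _ y' hy' z hxz hzy => ?_) (fun x' hx' => ?_)
      (Finset.mem_compl.2 hx))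
  · -- the union of the BSCCs is closed
    refine Finset.mem_compl.2 fun hzR => Finset.mem_compl.1 hy' ?_
    obtain ⟨D, hD, hzD⟩ := (Finset.mem_filter.1 hzR).2
    exact Finset.mem_filter.2 ⟨Finset.mem_univ _, D, hD, hD.2.1 z hzD y' hzy⟩
  · obtain ⟨D, hD, y₀, hy₀, hreach⟩ := exists_isBSCC_mcReach P x'
    have hy₀R : y₀ ∉ Rᶜ :=
      Finset.notMem_compl.2 (Finset.mem_filter.2 ⟨Finset.mem_univ _, D, hD, hy₀⟩)
    exact exists_sum_pow_apply_lt_one_of_mcReach hP Rᶜ hreach (k := 0)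
      (by simp [Matrix.one_apply, hy₀R])

theorem tendsto_pow_of_aperiodic (hP : IsSubstochastic P)
    (hap : ∀ D : Set α, IsBSCC P D → AperiodicBSCC P D) :
    ∃ L : Matrix α α ℝ, Tendsto (fun n => P ^ n) atTop (𝓝 L) := by
  choose L hL using fun x y => cauchySeq_tendsto_of_complete
    (cauchySeq_pow_apply_of_aperiodic hP hap x y)
  exact ⟨Matrix.of L, tendsto_pi_nhds.2 fun x => tendsto_pi_nhds.2 fun y => hL x y⟩

end MarkovChain

section Network

theorem copyProb_nonneg (B : GBN V) (X : V) (v : Bool) (b : V → Bool) :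
    0 ≤ copyProb B X v b := by
  unfold copyProb
  split_ifs
  · exact B.cpt_nonneg X _
  · exact sub_nonneg.2 (B.cpt_le_one X _)

theorem sum_copyProb (B : GBN V) (X : V) (b : V → Bool) : ∑ v, copyProb B X v b = 1 := by
  simp [copyProb]

theorem copyProb_update (B : GBN V) {X x : V} (hx : (x, X) ∉ B.edges) (v w : Bool)
    (b : V → Bool) : copyProb B X v (Function.update b x w) = copyProb B X v b := by
  have hpar : (fun p : {p // p ∈ Pre B.edges X} => Function.update b x w p.1) =
      fun p => b p.1 :=
    funext fun p =>
      Function.update_of_ne (fun h : p.1 = x => hx (by simpa [Pre, h] using p.2)) _ _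
  simp only [copyProb, hpar]

theorem distDissect_eq_sum_dirac (B : GBN V) (C : Finset V) (γ : Asg C → ℝ)
    (b : V → Bool) (c : Asg C) :
    distDissect B C γ b c = ∑ d, γ d * distDissect B C (DiracD d) b c := by
  simp [distDissect, DiracD, mul_ite, ite_mul]
  ring

theorem Next_eq_sum_dirac (B : GBN V) (C : Finset V) (γ : Asg C → ℝ) (a : V → Bool) :
    Next B C γ a = ∑ d, γ d * Next B C (DiracD d) a := by
  simp only [Next, distDissect_eq_sum_dirac B C γ, Finset.ite_sum_zero, Finset.mul_sum,
    mul_ite, mul_zero]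
  exact Finset.sum_comm

theorem marginal_Next (B : GBN V) (C : Finset V) (γ : Asg C → ℝ) :
    marginal (Next B C γ) C = Matrix.vecMul γ (Matrix.of (cutsetP B C)) := by
  funext c
  simp only [Matrix.vecMul, dotProduct, Matrix.of_apply, cutsetP, marginal, probIf,
    Next_eq_sum_dirac B C γ, Finset.ite_sum_zero, Finset.mul_sum, mul_ite, mul_zero]
  exact Finset.sum_comm

theorem nextSeq_eq_vecMul_pow (B : GBN V) (C : Finset V) (γ0 : Asg C → ℝ) (n : ℕ) :
    nextSeq B C γ0 n = Matrix.vecMul γ0 (Matrix.of (cutsetP B C) ^ n) := by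
  induction n with
  | zero => simp [nextSeq]
  | succ n ih => rw [nextSeq, ih, marginal_Next, Matrix.vecMul_vecMul, pow_succ]

theorem sum_marginal (μ : (V → Bool) → ℝ) (U : Finset V) :
    ∑ c : Asg U, marginal μ U c = ∑ b, μ b := by
  simp only [marginal, probIf]
  rw [Finset.sum_comm]
  refine Finset.sum_congr rfl fun b _ => ?_
  have hagree : ∀ c : Asg U, Agrees b U c ↔ (fun x => b x.1) = c :=
    fun c => ⟨funext, fun h x => congrFun h x⟩
  simp only [hagree, Finset.sum_ite_eq, Finset.mem_univ, if_true]

theorem sum_ite_eq_off (C : Finset V) (b : V → Bool) (F : Asg C → ℝ) :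
    ∑ a : V → Bool, (if ∀ x, x ∉ C → b x = a x then F (fun y => a y.1) else 0) =
      ∑ c, F c := by
  rw [← (Equiv.piEquivPiSubtypeProd (· ∈ C) fun _ => Bool).symm.sum_comp,
    Fintype.sum_prod_type]
  refine Finset.sum_congr rfl fun c _ => ?_
  rw [Finset.sum_eq_single (fun x => b x.1)]
  · simp only [Equiv.piEquivPiSubtypeProd_symm_apply, Subtype.coe_eta, dif_pos, Finset.coe_mem]
    rw [if_pos fun x hx => by simp [hx]]
  · intro r _ hr
    rw [if_neg]
    intro h
    refine hr (funext fun x => ?_)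
    simpa [Equiv.piEquivPiSubtypeProd_symm_apply, x.2, eq_comm] using h x.1 x.2
  · simp

theorem sum_Next (B : GBN V) (C : Finset V) (γ : Asg C → ℝ) :
    ∑ a, Next B C γ a = ∑ b, ∑ c, distDissect B C γ b c := by
  simp only [Next]
  rw [Finset.sum_comm]
  exact Finset.sum_congr rfl fun b _ => sum_ite_eq_off C b _

theorem sum_distDissect (B : GBN V) (C : Finset V) (γ : Asg C → ℝ) (b : V → Bool) :
    ∑ c, distDissect B C γ b c = B.ι (fun x => b x.1) * γ (fun x => b x.1) *
      ∏ X ∈ (Finset.univ \ InitSet B.edges) \ C, copyProb B X (b X) b := by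
  simp only [distDissect, ← Finset.mul_sum, ← Finset.univ_eq_attach]
  rw [← Fintype.prod_sum (fun (Y : {x // x ∈ C}) v => copyProb B Y.1 v b)]
  simp only [sum_copyProb, Finset.prod_const_one, mul_one]

theorem sum_eq_sum_update_false (X : V) (F : (V → Bool) → ℝ) :
    ∑ b, F b = ∑ b, if b X = true then F b + F (Function.update b X false) else 0 := by
  have hflip : Function.Involutive fun b : V → Bool => Function.update b X (!b X) :=
    fun b => by simp
  have hfalse : ∑ b, (if b X = true then 0 else F b) =
      ∑ b, if b X = true then F (Function.update b X false) else 0 := by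
    rw [← Equiv.sum_comp hflip.toPerm fun b => if b X = true then 0 else F b]
    refine Finset.sum_congr rfl fun b _ => ?_
    simp only [Function.Involutive.coe_toPerm, Function.update_self]
    by_cases h : b X = true <;> simp [h]
  calc ∑ b, F b = ∑ b, ((if b X = true then F b else 0) + if b X = true then 0 else F b) :=
        Finset.sum_congr rfl fun b _ => by split_ifs <;> simp
    _ = _ := by
        rw [Finset.sum_add_distrib, hfalse, ← Finset.sum_add_distrib]
        exact Finset.sum_congr rfl fun b _ => by split_ifs <;> simp

theorem sum_copyProb_mul (B : GBN V) {X : V} (hX : (X, X) ∉ B.edges) (H : (V → Bool) → ℝ)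
    (hH : ∀ b v, H (Function.update b X v) = H b) :
    ∑ b, copyProb B X (b X) b * H b = ∑ b, if b X = true then H b else 0 := by
  rw [sum_eq_sum_update_false X]
  refine Finset.sum_congr rfl fun b _ => ?_
  split_ifs with hb
  · rw [Function.update_self, copyProb_update B hX, hH, hb, ← add_mul,
      ← Fintype.sum_bool fun v => copyProb B X v b, sum_copyProb, one_mul]
  · rfl

theorem exists_sink {β : Type} [Finite β] {r : β → β → Prop} {W : Finset β}
    (hne : W.Nonempty)
    (hW : ∀ x, ¬ Relation.TransGen (fun a b => r a b ∧ a ∈ W ∧ b ∈ W) x x) :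
    ∃ X ∈ W, ∀ Y ∈ W, ¬ r X Y := by
  let above : β → β → Prop := fun a b =>
    Relation.TransGen (fun a b => r a b ∧ a ∈ W ∧ b ∈ W) b a
  have : IsTrans β above := ⟨fun _ _ _ hab hbc => hbc.trans hab⟩
  have : Std.Irrefl above := ⟨hW⟩
  obtain ⟨X, hX, hmin⟩ := (Finite.wellFounded_of_trans_of_irrefl above).has_min W hne
  exact ⟨X, hX, fun Y hY hXY => hmin Y hY (.single ⟨hXY, hX, hY⟩)⟩

theorem sum_mul_prod_copyProb (B : GBN V) {W : Finset V}
    (hW : ∀ x, ¬ Relation.TransGen (fun a b => (a, b) ∈ B.edges ∧ a ∈ W ∧ b ∈ W) x x)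
    (G : (V → Bool) → ℝ) (hG : ∀ b, ∀ x ∈ W, ∀ v, G (Function.update b x v) = G b) :
    ∑ b, G b * ∏ X ∈ W, copyProb B X (b X) b =
      ∑ b, if ∀ x ∈ W, b x = true then G b else 0 := by
  induction W using Finset.strongInduction generalizing G with
  | H W ih =>
  rcases W.eq_empty_or_nonempty with rfl | hne
  · simp
  obtain ⟨X, hXW, hsink⟩ := exists_sink hne hW
  have hW' : ∀ x, ¬ Relation.TransGen
      (fun a b => (a, b) ∈ B.edges ∧ a ∈ W.erase X ∧ b ∈ W.erase X) x x := fun x h =>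
    hW x (Relation.TransGen.mono (fun _ _ ⟨hab, ha, hb⟩ => ⟨hab, Finset.mem_of_mem_erase ha,
      Finset.mem_of_mem_erase hb⟩) x x h)
  -- sum out the sink `X` first: no other factor depends on its value
  have hX : ∑ b, G b * ∏ Y ∈ W, copyProb B Y (b Y) b =
      ∑ b, (if b X = true then G b else 0) * ∏ Y ∈ W.erase X, copyProb B Y (b Y) b := by
    simp only [← Finset.mul_prod_erase W _ hXW, mul_left_comm (G _), ite_mul, zero_mul]
    refine sum_copyProb_mul B (hsink X hXW) _ fun b v => ?_
    rw [hG b X hXW]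
    congr 1
    refine Finset.prod_congr rfl fun Y hY => ?_
    rw [Function.update_of_ne (Finset.ne_of_mem_erase hY),
      copyProb_update B (hsink Y (Finset.mem_of_mem_erase hY))]
  rw [hX, ih _ (Finset.erase_ssubset hXW) hW' _ fun b x hx v => by
    rw [Function.update_of_ne (Finset.ne_of_mem_erase hx).symm,
      hG b x (Finset.mem_of_mem_erase hx)]]
  refine Finset.sum_congr rfl fun b _ => ?_
  have hsplit : (∀ x ∈ W, b x = true) ↔ (∀ x ∈ W.erase X, b x = true) ∧ b X = true :=
    ⟨fun h => ⟨fun x hx => h x (Finset.mem_of_mem_erase hx), h X hXW⟩,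
      fun ⟨h, hX⟩ x hx =>
        if hxX : x = X then hxX ▸ hX else h x (Finset.mem_erase.2 ⟨hxX, hx⟩)⟩
  simp only [hsplit, ite_and]

theorem distDissect_nonneg (B : GBN V) (C : Finset V) {γ : Asg C → ℝ} (hγ : ∀ d, 0 ≤ γ d)
    (b : V → Bool) (c : Asg C) : 0 ≤ distDissect B C γ b c :=
  mul_nonneg (mul_nonneg (mul_nonneg (B.ι_dist.1 _) (hγ _))
    (Finset.prod_nonneg fun X _ => copyProb_nonneg B X _ b))
    (Finset.prod_nonneg fun Y _ => copyProb_nonneg B Y.1 _ b)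

theorem cutsetP_nonneg (B : GBN V) (C : Finset V) (b c : Asg C) : 0 ≤ cutsetP B C b c := by
  unfold cutsetP marginal probIf Next
  refine Finset.sum_nonneg fun a _ => ?_
  split_ifs
  · refine Finset.sum_nonneg fun b' _ => ?_
    split_ifs
    · exact distDissect_nonneg B C (fun d => by unfold DiracD; split_ifs <;> norm_num) _ _
    · exact le_rfl
  · exact le_rfl

theorem sum_ι_le_one (B : GBN V) {S : Finset (V → Bool)}
    (hS : Set.InjOn (fun (b : V → Bool) (x : {x // x ∈ InitSet B.edges}) => b x.1) S) :
    ∑ b ∈ S, B.ι (fun x => b x.1) ≤ 1 := by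
  rw [← Finset.sum_image hS]
  exact (Finset.sum_le_sum_of_subset_of_nonneg (Finset.subset_univ _) fun d _ _ =>
    B.ι_dist.1 d).trans_eq B.ι_dist.2

theorem sum_cutsetP_le_one (B : GBN V) (C : Finset V) (hC : IsCutset B.edges C) (b : Asg C) :
    ∑ c, cutsetP B C b c ≤ 1 := by
  set K := (Finset.univ \ InitSet B.edges) \ C
  have hKI : ∀ x ∈ K, x ∉ InitSet B.edges := fun x hx =>
    (Finset.mem_sdiff.1 (Finset.mem_sdiff.1 hx).1).2
  have hKC : ∀ x ∈ K, x ∉ C := fun x hx => (Finset.mem_sdiff.1 hx).2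
  have hK : ∀ x, ¬ Relation.TransGen (fun a b => (a, b) ∈ B.edges ∧ a ∈ K ∧ b ∈ K) x x :=
    fun x h => hC x (Relation.TransGen.mono (fun _ _ ⟨hab, ha, hb⟩ =>
      ⟨hab, hKC _ ha, hKC _ hb⟩) x x h)
  simp only [cutsetP, sum_marginal, sum_Next, sum_distDissect]
  rw [sum_mul_prod_copyProb B hK _ fun b' x hx v => ?_]
  · simp only [DiracD, mul_ite, mul_one, mul_zero, ← ite_and, ← Finset.sum_filter]
    refine sum_ι_le_one B fun b₁ hb₁ b₂ hb₂ h => funext fun x => ?_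
    simp only [Finset.coe_filter, Finset.mem_univ, true_and, Set.mem_ofPred_eq] at hb₁ hb₂
    by_cases hxI : x ∈ InitSet B.edges
    · exact congrFun h ⟨x, hxI⟩
    by_cases hxC : x ∈ C
    · exact (congrFun hb₁.2 ⟨x, hxC⟩).trans (congrFun hb₂.2 ⟨x, hxC⟩).symm
    have hxK : x ∈ K :=
      Finset.mem_sdiff.2 ⟨Finset.mem_sdiff.2 ⟨Finset.mem_univ x, hxI⟩, hxC⟩
    exact (hb₁.1 x hxK).trans (hb₂.1 x hxK).symm
  · have hrestrict : ∀ U : Finset V, x ∉ U →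
        (fun y : {y // y ∈ U} => Function.update b' x v y.1) = fun y => b' y.1 :=
      fun U hxU => funext fun y => Function.update_of_ne (fun h : y.1 = x => hxU (h ▸ y.2)) _ _
    rw [hrestrict _ (hKI x hx), hrestrict _ (hKC x hx)]

end Network

/-- If every bottom SCC of the cutset Markov chain `M_{B↑C}` is
aperiodic, then `Lim(B,C,γ0)` is defined for every initial cutset distribution
`γ0`, i.e. the sequence `γ_n` with `γ_{n+1} = Next(B,C,γ_n)|_C` converges. -/
theorem stmt9 {V : Type} [Fintype V] [DecidableEq V]
    (B : GBN V) (C : Finset V) (hC : IsCutset B.edges C)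
    (hap : ∀ D : Set (Asg C), IsBSCC (cutsetP B C) D →
      AperiodicBSCC (cutsetP B C) D) :
    ∀ γ0 : Asg C → ℝ, IsDist γ0 →
      ∃ γ : Asg C → ℝ, Tendsto (nextSeq B C γ0) atTop (nhds γ) := by
  intro γ0 _
  have hP : IsSubstochastic (Matrix.of (cutsetP B C)) :=
    ⟨cutsetP_nonneg B C, sum_cutsetP_le_one B C hC⟩
  obtain ⟨L, hL⟩ := tendsto_pow_of_aperiodic hP hap
  refine ⟨Matrix.vecMul γ0 L, ?_⟩
  rw [show nextSeq B C γ0 = _ from funext (nextSeq_eq_vecMul_pow B C γ0)]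
  exact ((continuous_const.matrix_vecMul continuous_id).tendsto L).comp hL

end GBNPaper
end
end

section
/- Let B be a generalized Bayesian network over nodes V, let C ⊆ V be a cutset for B, and let μ ∈ [B]_{MC-C}. Then μ is strongly CPT-consistent for every node in V∖C and weakly CPT-consistent for every node in C. -/
open Filter
open scoped Classical

noncomputable section

/-!
Write `μ = Extend B C γ`. Summing out the copies of the cutset nodes gives
`μ f = ι (f|Init) * γ (f|C) * ∏ Pr (f X | f|Pre X)`, the product over the non-initial nodes
outside `C`. These nodes form an acyclic subnetwork, so their chain-rule factors can be summed
out one childless node at a time, each contributing `Pr (T | _) + Pr (F | _) = 1`.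

For `X ∉ C`, let `T` be `X` together with its descendants along edges that avoid `C`. No node of
`T` is a parent of `X` or of a non-cutset node outside `T`, so summing out `T`, or only
`T \ {X}` once `X = true` is fixed, yields the two sides of strong consistency; they differ by
the factor `Pr (X = T | c)`.

For `X ∈ C`, summing out all non-cutset nodes shows `μ|_C ≤ γ` pointwise, while stationarity of
`γ` gives `μ` and `γ` the same total mass; hence `μ|_C = γ`. Stationarity, `γ = γ P`, then says
`γ (X = T) = ∑ f, μ f * Pr (X = T | f|Pre X)`, which is weak consistency.
-/

namespace GBNPaper

section BooleanSums

variable {α : Type} [Fintype α] [DecidableEq α] {M : Type} [AddCommMonoid M]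

theorem sum_eq_sum_ite_add_update_false (F : (α → Bool) → M) (y : α) :
    ∑ f, F f = ∑ f, if f y = true then F f + F (Function.update f y false) else 0 := by
  let σ : Equiv.Perm (α → Bool) :=
    Function.Involutive.toPerm (fun f => Function.update f y (!f y)) fun f => by simp
  have hσ : ∀ f, σ f = Function.update f y (!f y) := fun _ => rfl
  calc ∑ f, F f
      = ∑ f, (if f y = true then F f else 0) + ∑ f, if f y = true then 0 else F f := by
        rw [← Finset.sum_add_distrib]
        exact Finset.sum_congr rfl fun f _ => by split_ifs <;> simp
    _ = ∑ f, (if f y = true then F f else 0) + ∑ f, if f y = true then F (σ f) else 0 := by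
        congr 1
        rw [← Equiv.sum_comp σ]
        exact Finset.sum_congr rfl fun f _ => by cases hf : f y <;> simp [hσ, hf]
    _ = _ := by
        rw [← Finset.sum_add_distrib]
        exact Finset.sum_congr rfl fun f _ => by split_ifs with hf <;> simp [hσ, hf]

theorem sum_prod_bool {R : Type} [CommSemiring R] (g : α → Bool → R) :
    ∑ c : α → Bool, ∏ a, g a (c a) = ∏ a, (g a true + g a false) := by
  simp [← Fintype.prod_sum]

theorem sum_ite_prod_bool {R : Type} [CommSemiring R] (g : α → Bool → R)
    (hg : ∀ a, g a true + g a false = 1) (a₀ : α) :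
    ∑ c : α → Bool, (if c a₀ = true then ∏ a, g a (c a) else 0) = g a₀ true := by
  let g' : α → Bool → R := fun a v => if a = a₀ ∧ v = false then 0 else g a v
  have hpin : ∀ c : α → Bool, (if c a₀ = true then ∏ a, g a (c a) else 0) = ∏ a, g' a (c a) := by
    intro c
    split_ifs with hc
    · exact Finset.prod_congr rfl fun a _ => by
        by_cases ha : a = a₀ <;> simp [g', ha, hc]
    · exact (Finset.prod_eq_zero (Finset.mem_univ a₀) (by simp [g', hc])).symm
  rw [Finset.sum_congr rfl fun c _ => hpin c, sum_prod_bool,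
    Finset.prod_eq_single a₀ fun a _ ha => by simp [g', ha, hg a]]
  · simp [g']
  · simp

end BooleanSums

section Graphs

variable {V : Type}

theorem mem_Pre [DecidableEq V] {E : Finset (V × V)} {p X : V} : p ∈ Pre E X ↔ (p, X) ∈ E := by
  simp [Pre]

theorem agrees_iff {f : V → Bool} {U : Finset V} {d : Asg U} :
    Agrees f U d ↔ (fun x : {x // x ∈ U} => f x.1) = d := by
  simp [funext_iff, eq_comm]

theorem IsCutset.exists_sink [Finite V] {E : Finset (V × V)} {C : Finset V} (hC : IsCutset E C)
    {T : Finset V} (hTC : ∀ x ∈ T, x ∉ C) (hT : T.Nonempty) :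
    ∃ x ∈ T, ∀ y ∈ T, (x, y) ∉ E := by
  let r : V → V → Prop := fun a b => (b, a) ∈ E ∧ a ∈ T ∧ b ∈ T
  have : IsTrans V (Relation.TransGen r) := ⟨fun _ _ _ => Relation.TransGen.trans⟩
  have : Std.Irrefl (Relation.TransGen r) := ⟨fun x hx => hC x <| Relation.transGen_swap.1 <|
    Relation.TransGen.mono (fun a b hab => ⟨hab.1, hTC b hab.2.2, hTC a hab.2.1⟩) _ _ hx⟩
  obtain ⟨x, hxT, hmin⟩ := (Finite.wellFounded_of_trans_of_irrefl (Relation.TransGen r)).has_min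
    (↑T : Set V) (Finset.coe_nonempty.2 hT)
  exact ⟨x, hxT, fun y hyT hxy => hmin y hyT (Relation.TransGen.single ⟨hxy, hyT, hxT⟩)⟩

def descendantsOff [Fintype V] (E : Finset (V × V)) (C : Finset V) (X : V) : Finset V :=
  Finset.univ.filter fun y => Relation.TransGen (fun a b => (a, b) ∈ E ∧ b ∉ C) X y

section descendantsOff

variable [Fintype V] {E : Finset (V × V)} {C : Finset V} {X : V}

theorem mem_descendantsOff {y : V} :
    y ∈ descendantsOff E C X ↔ Relation.TransGen (fun a b => (a, b) ∈ E ∧ b ∉ C) X y := by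
  simp [descendantsOff]

theorem notMem_of_mem_descendantsOff {y : V} (hy : y ∈ descendantsOff E C X) : y ∉ C := by
  rcases mem_descendantsOff.1 hy with ⟨h⟩ | ⟨-, h⟩ <;> exact h.2

theorem notMem_initSet_of_mem_descendantsOff [DecidableEq V] {y : V}
    (hy : y ∈ descendantsOff E C X) : y ∉ InitSet E := by
  obtain ⟨p, hp⟩ : ∃ p, (p, y) ∈ E := by
    rcases mem_descendantsOff.1 hy with ⟨h⟩ | ⟨-, h⟩ <;> exact ⟨_, h.1⟩
  simp only [InitSet, Finset.mem_filter, Finset.mem_univ, true_and,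
    Finset.eq_empty_iff_forall_notMem]
  exact fun h => h p (mem_Pre.2 hp)

theorem mem_descendantsOff_of_edge [DecidableEq V] {y z : V}
    (hy : y ∈ insert X (descendantsOff E C X)) (hyz : (y, z) ∈ E) (hz : z ∉ C) :
    z ∈ descendantsOff E C X := by
  rcases Finset.mem_insert.1 hy with rfl | hy
  · exact mem_descendantsOff.2 (.single ⟨hyz, hz⟩)
  · exact mem_descendantsOff.2 ((mem_descendantsOff.1 hy).tail ⟨hyz, hz⟩)

theorem IsCutset.notMem_descendantsOff (hC : IsCutset E C) (hX : X ∉ C) :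
    X ∉ descendantsOff E C X := by
  have key : ∀ y, Relation.TransGen (fun a b => (a, b) ∈ E ∧ b ∉ C) X y →
      Relation.TransGen (fun a b => (a, b) ∈ E ∧ a ∉ C ∧ b ∉ C) X y ∧ y ∉ C := by
    intro y hy
    induction hy with
    | single h => exact ⟨.single ⟨h.1, hX, h.2⟩, h.2⟩
    | tail _ h ih => exact ⟨ih.1.tail ⟨h.1, ih.2, h.2⟩, h.2⟩
  exact fun hXD => hC X (key X (mem_descendantsOff.1 hXD)).1

theorem IsCutset.parent_notMem_insert_descendantsOff [DecidableEq V] (hC : IsCutset E C)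
    (hX : X ∉ C) {p : V} (hp : p ∈ Pre E X) : p ∉ insert X (descendantsOff E C X) := fun h =>
  hC.notMem_descendantsOff hX (mem_descendantsOff_of_edge h (mem_Pre.1 hp) hX)

end descendantsOff

end Graphs

section Networks

variable {V : Type} [Fintype V] [DecidableEq V]

theorem sum_marginal_mul (μ : (V → Bool) → ℝ) (U : Finset V) (φ : Asg U → ℝ) :
    ∑ d, marginal μ U d * φ d = ∑ f, μ f * φ (fun x => f x.1) := by
  simp only [marginal, probIf, Finset.sum_mul, ite_mul, zero_mul, agrees_iff]
  rw [Finset.sum_comm]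
  simp

theorem copyProb_true_add_false (B : GBN V) (x : V) (f : V → Bool) :
    copyProb B x true f + copyProb B x false f = 1 := by
  simp [copyProb]

theorem copyProb_true_of_agrees (B : GBN V) {X : V} {c : Asg (Pre B.edges X)} {f : V → Bool}
    (h : Agrees f (Pre B.edges X) c) : copyProb B X true f = B.cpt X c := by
  simp [copyProb, agrees_iff.1 h]

theorem dependsOn_copyProb (B : GBN V) (x : V) (v : Bool) :
    DependsOn (copyProb B x v) ↑(Pre B.edges x) := fun f g h => by
  simp only [copyProb]
  congr 3 <;> exact funext fun p => h p.1 p.2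

theorem dependsOn_prod_copyProb (B : GBN V) {T : Finset V} {s : Set V}
    (hs : ∀ z ∈ T, z ∈ s ∧ ↑(Pre B.edges z) ⊆ s) :
    DependsOn (fun f => ∏ z ∈ T, copyProb B z (f z) f) s := fun f g h =>
  Finset.prod_congr rfl fun z hz => by
    rw [h z (hs z hz).1, dependsOn_copyProb B z _ fun p hp => h p ((hs z hz).2 hp)]

theorem sum_mul_copyProb (B : GBN V) {y : V} (hy : y ∉ Pre B.edges y)
    {h : (V → Bool) → ℝ} (hh : DependsOn h {y}ᶜ) :
    ∑ f, h f * copyProb B y (f y) f = ∑ f, if f y = true then h f else 0 := by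
  rw [sum_eq_sum_ite_add_update_false _ y]
  refine Finset.sum_congr rfl fun f _ => ?_
  split_ifs with hf
  · have hoff : ∀ x ∈ ({y}ᶜ : Set V), Function.update f y false x = f x :=
      fun x hx => Function.update_of_ne hx _ _
    rw [Function.update_self, hh hoff,
      dependsOn_copyProb B y false fun x hx => hoff x fun hxy => hy (hxy ▸ hx), hf,
      ← mul_add, copyProb_true_add_false, mul_one]
  · rfl

theorem IsCutset.sum_mul_prod_copyProb (B : GBN V) {C : Finset V} (hC : IsCutset B.edges C)
    {T : Finset V} (hTC : ∀ x ∈ T, x ∉ C) {h : (V → Bool) → ℝ} (hh : DependsOn h (↑T)ᶜ) :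
    ∑ f, h f * ∏ x ∈ T, copyProb B x (f x) f = ∑ f, if ∀ x ∈ T, f x = true then h f else 0 := by
  induction T using Finset.strongInduction generalizing h with
  | _ T ih =>
  rcases T.eq_empty_or_nonempty with rfl | hT
  · simp
  obtain ⟨x, hxT, hsink⟩ := hC.exists_sink hTC hT
  have hx : x ∉ Pre B.edges x := fun hp => hsink x hxT (mem_Pre.1 hp)
  set T' := T.erase x
  have hrest : DependsOn (fun f => h f * ∏ z ∈ T', copyProb B z (f z) f) {x}ᶜ := by
    have hT' : DependsOn (fun f => ∏ z ∈ T', copyProb B z (f z) f) {x}ᶜ :=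
      dependsOn_prod_copyProb B fun z hz => ⟨Finset.ne_of_mem_erase hz, fun p hp hpx =>
        hsink z (Finset.mem_of_mem_erase hz) (mem_Pre.1 (hpx ▸ hp))⟩
    exact fun f g hfg => by
      dsimp only
      rw [hh fun i hi => hfg i fun hix => hi (hix ▸ hxT)]
      exact congrArg _ (hT' hfg)
  have hpin : DependsOn (fun f => if f x = true then h f else 0) (↑T')ᶜ := fun f g hfg => by
    dsimp only
    rw [hfg x (by simp [T']), hh fun i hi => hfg i fun hi' => hi (Finset.mem_of_mem_erase hi')]
  calc ∑ f, h f * ∏ z ∈ T, copyProb B z (f z) f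
      = ∑ f, (h f * ∏ z ∈ T', copyProb B z (f z) f) * copyProb B x (f x) f := by
        simp only [← Finset.mul_prod_erase T _ hxT, T']
        exact Finset.sum_congr rfl fun f _ => by ring
    _ = ∑ f, (if f x = true then h f else 0) * ∏ z ∈ T', copyProb B z (f z) f := by
        rw [sum_mul_copyProb B hx hrest]
        simp only [ite_mul, zero_mul]
    _ = _ := by
        rw [ih T' (Finset.erase_ssubset hxT)
          (fun z hz => hTC z (Finset.mem_of_mem_erase hz)) hpin]
        refine Finset.sum_congr rfl fun f _ => (ite_and _ _ _ _).symm.trans (if_congr ?_ rfl rfl)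
        conv_rhs => rw [← Finset.insert_erase hxT]
        rw [Finset.forall_mem_insert, and_comm]

def cptNodes (B : GBN V) (C : Finset V) : Finset V :=
  (Finset.univ \ InitSet B.edges) \ C

theorem mem_cptNodes {B : GBN V} {C : Finset V} {x : V} :
    x ∈ cptNodes B C ↔ x ∉ InitSet B.edges ∧ x ∉ C := by
  simp [cptNodes]

theorem sum_prod_copyProb_attach (B : GBN V) (C : Finset V) (f : V → Bool) :
    ∑ c : Asg C, ∏ Y ∈ C.attach, copyProb B Y.1 (c Y) f = 1 := by
  rw [Finset.attach_eq_univ, sum_prod_bool fun (Y : {x // x ∈ C}) v => copyProb B Y.1 v f]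
  exact Finset.prod_eq_one fun Y _ => copyProb_true_add_false B Y.1 f

theorem extend_apply (B : GBN V) (C : Finset V) (γ : Asg C → ℝ) (f : V → Bool) :
    Extend B C γ f = B.ι (fun x => f x.1) * γ (fun x => f x.1) *
      ∏ x ∈ cptNodes B C, copyProb B x (f x) f := by
  simp only [Extend, distDissect, ← Finset.mul_sum, sum_prod_copyProb_attach, mul_one, cptNodes]

theorem distDissect_eq_extend_mul (B : GBN V) (C : Finset V) (γ : Asg C → ℝ)
    (f : V → Bool) (c : Asg C) :
    distDissect B C γ f c = Extend B C γ f * ∏ Y ∈ C.attach, copyProb B Y.1 (c Y) f := by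
  rw [extend_apply]
  rfl

theorem marginal_next (B : GBN V) (C : Finset V) (γ : Asg C → ℝ) (c : Asg C) :
    marginal (Next B C γ) C c = ∑ b, distDissect B C γ b c := by
  simp only [marginal, probIf, Next, Finset.ite_sum_zero, ← ite_and]
  rw [Finset.sum_comm]
  refine Finset.sum_congr rfl fun b _ => ?_
  let glue : V → Bool := fun x => if h : x ∈ C then c ⟨x, h⟩ else b x
  have hglue : ∀ a, (Agrees a C c ∧ ∀ x, x ∉ C → b x = a x) ↔ a = glue := fun a => by
    simp only [funext_iff, glue]
    constructor
    · rintro ⟨hC, hb⟩ x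
      split_ifs with hx
      exacts [hC ⟨x, hx⟩, (hb x hx).symm]
    · rintro h
      exact ⟨fun x => by simp [h x.1, x.2], fun x hx => by simp [h x, hx]⟩
  simp only [hglue, Finset.sum_ite_eq', Finset.mem_univ, if_true]
  congr
  exact agrees_iff.1 ((hglue glue).2 rfl).1

theorem eq_sum_extend_mul_of_stationary {B : GBN V} {C : Finset V} {γ : Asg C → ℝ}
    (hstat : γ = vecMul γ (cutsetP B C)) (c : Asg C) :
    γ c = ∑ f, Extend B C γ f * ∏ Y ∈ C.attach, copyProb B Y.1 (c Y) f := by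
  conv_lhs => rw [hstat]
  simp only [vecMul, cutsetP, marginal_next, Finset.mul_sum]
  rw [Finset.sum_comm]
  refine Finset.sum_congr rfl fun f _ => ?_
  rw [← distDissect_eq_extend_mul]
  simp only [distDissect, DiracD, mul_ite, mul_one, mul_zero, ite_mul, zero_mul,
    Finset.sum_ite_eq, Finset.mem_univ, if_true]
  ring

theorem sum_ite_comp_restrict_le {U : Finset V} {φ : Asg U → ℝ} (hφ : ∀ a, 0 ≤ φ a)
    {P : (V → Bool) → Prop} [DecidablePred P]
    (hP : ∀ f g, P f → P g → (∀ x ∈ U, f x = g x) → f = g) :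
    ∑ f, (if P f then φ (fun x => f x.1) else 0) ≤ ∑ a, φ a := by
  have hinj : Set.InjOn (fun (f : V → Bool) (x : {x // x ∈ U}) => f x.1)
      ↑(Finset.univ.filter P) := fun f hf g hg hfg =>
    hP f g (Finset.mem_filter.1 hf).2 (Finset.mem_filter.1 hg).2 fun x hx => congrFun hfg ⟨x, hx⟩
  rw [← Finset.sum_filter, ← Finset.sum_image hinj]
  exact Finset.sum_le_sum_of_subset_of_nonneg (Finset.subset_univ _) fun a _ _ => hφ a

theorem sum_extend_eq_sum_of_stationary {B : GBN V} {C : Finset V} {γ : Asg C → ℝ}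
    (hstat : γ = vecMul γ (cutsetP B C)) :
    ∑ f, Extend B C γ f = ∑ c, γ c := by
  simp only [eq_sum_extend_mul_of_stationary hstat _]
  rw [Finset.sum_comm]
  simp only [← Finset.mul_sum, sum_prod_copyProb_attach, mul_one]

theorem marginal_extend_le (B : GBN V) {C : Finset V} (hC : IsCutset B.edges C)
    {γ : Asg C → ℝ} (hγ : ∀ d, 0 ≤ γ d) (d : Asg C) :
    marginal (Extend B C γ) C d ≤ γ d := by
  have hS : ∀ x ∈ cptNodes B C, x ∉ C := fun x hx => (mem_cptNodes.1 hx).2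
  have hdep : DependsOn (fun f => if Agrees f C d then B.ι (fun x => f x.1) else 0)
      (↑(cptNodes B C))ᶜ := fun f g hfg => by
    have hC' : ∀ x ∈ C, f x = g x := fun x hx => hfg x fun h => hS x h hx
    have hI : ∀ x ∈ InitSet B.edges, f x = g x :=
      fun x hx => hfg x fun h => (mem_cptNodes.1 h).1 hx
    simp only [agrees_iff]
    rw [show (fun x : {x // x ∈ C} => f x.1) = fun x => g x.1 from funext fun x => hC' x x.2,
      show (fun x : {x // x ∈ InitSet B.edges} => f x.1) = fun x => g x.1 from
        funext fun x => hI x x.2]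
  calc marginal (Extend B C γ) C d
      = γ d * ∑ f, (if Agrees f C d then B.ι (fun x => f x.1) else 0) *
          ∏ x ∈ cptNodes B C, copyProb B x (f x) f := by
        simp only [marginal, probIf, extend_apply, Finset.mul_sum]
        refine Finset.sum_congr rfl fun f _ => ?_
        split_ifs with h
        · rw [agrees_iff.1 h]
          ring
        · simp
    _ = γ d * ∑ f, if (∀ x ∈ cptNodes B C, f x = true) ∧ Agrees f C d then
          B.ι (fun x => f x.1) else 0 := by
        rw [hC.sum_mul_prod_copyProb B hS hdep]
        simp only [ite_and]
    _ ≤ γ d * 1 := by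
        refine mul_le_mul_of_nonneg_left ?_ (hγ d)
        rw [← B.ι_dist.2]
        refine sum_ite_comp_restrict_le B.ι_dist.1 fun f g hf hg hfg => funext fun x => ?_
        by_cases hxI : x ∈ InitSet B.edges
        · exact hfg x hxI
        by_cases hxC : x ∈ C
        · exact (hf.2 ⟨x, hxC⟩).trans (hg.2 ⟨x, hxC⟩).symm
        have hx : x ∈ cptNodes B C := mem_cptNodes.2 ⟨hxI, hxC⟩
        rw [hf.1 x hx, hg.1 x hx]
    _ = γ d := mul_one _

theorem marginal_extend_of_stationary (B : GBN V) {C : Finset V} (hC : IsCutset B.edges C)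
    {γ : Asg C → ℝ} (hγ : ∀ d, 0 ≤ γ d) (hstat : γ = vecMul γ (cutsetP B C)) :
    marginal (Extend B C γ) C = γ := by
  have htot : ∑ d, marginal (Extend B C γ) C d = ∑ d, γ d := by
    have h := sum_marginal_mul (Extend B C γ) C fun _ => 1
    simp only [mul_one] at h
    rw [h, sum_extend_eq_sum_of_stationary hstat]
  funext d
  exact (Finset.sum_eq_sum_iff_of_le fun d _ => marginal_extend_le B hC hγ d).1 htot d
    (Finset.mem_univ d)

theorem weakCPT_extend (B : GBN V) {C : Finset V} (hC : IsCutset B.edges C)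
    {γ : Asg C → ℝ} (hγ : ∀ d, 0 ≤ γ d) (hstat : γ = vecMul γ (cutsetP B C))
    {X : V} (hXC : X ∈ C) : WeakCPT B (Extend B C γ) X := by
  set μ := Extend B C γ
  let pin : Asg C → ℝ := fun d => if d ⟨X, hXC⟩ = true then 1 else 0
  have hpin : ∀ f, ∑ d, pin d * ∏ Y ∈ C.attach, copyProb B Y.1 (d Y) f = copyProb B X true f :=
    fun f => by
      refine Eq.trans ?_ (sum_ite_prod_bool (fun (Y : {x // x ∈ C}) v => copyProb B Y.1 v f)
        (fun Y => copyProb_true_add_false B Y.1 f) ⟨X, hXC⟩)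
      simp only [pin, ite_mul, one_mul, zero_mul, Finset.attach_eq_univ]
  calc probIf μ (fun f => f X = true)
      = ∑ d, marginal μ C d * pin d := by
        rw [sum_marginal_mul]
        exact Finset.sum_congr rfl fun f _ => by simp [pin]
    _ = ∑ d, γ d * pin d := by rw [marginal_extend_of_stationary B hC hγ hstat]
    _ = ∑ f, μ f * ∑ d, pin d * ∏ Y ∈ C.attach, copyProb B Y.1 (d Y) f := by
        simp only [eq_sum_extend_mul_of_stationary hstat _, Finset.sum_mul, Finset.mul_sum]
        rw [Finset.sum_comm]
        exact Finset.sum_congr rfl fun f _ => Finset.sum_congr rfl fun d _ => by ring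
    _ = ∑ c, marginal μ (Pre B.edges X) c * B.cpt X c := by
        simp only [hpin, sum_marginal_mul]
        rfl

theorem insert_descendantsOff_subset_cptNodes (B : GBN V) {C : Finset V} {X : V}
    (hXI : X ∉ InitSet B.edges) (hXC : X ∉ C) :
    insert X (descendantsOff B.edges C X) ⊆ cptNodes B C :=
  Finset.insert_subset (mem_cptNodes.2 ⟨hXI, hXC⟩) fun _ hy =>
    mem_cptNodes.2 ⟨notMem_initSet_of_mem_descendantsOff hy, notMem_of_mem_descendantsOff hy⟩

theorem dependsOn_prod_copyProb_sdiff_descendantsOff (B : GBN V) (C : Finset V) (X : V) :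
    DependsOn (fun f => ∏ z ∈ cptNodes B C \ insert X (descendantsOff B.edges C X),
      copyProb B z (f z) f) (↑(insert X (descendantsOff B.edges C X)))ᶜ :=
  dependsOn_prod_copyProb B fun _ hz => ⟨(Finset.mem_sdiff.1 hz).2, fun _ hp hpT =>
    (Finset.mem_sdiff.1 hz).2 (Finset.mem_insert_of_mem (mem_descendantsOff_of_edge hpT
      (mem_Pre.1 hp) (mem_cptNodes.1 (Finset.mem_sdiff.1 hz).1).2))⟩

section StrongConsistency

variable (B : GBN V) (C : Finset V) (γ : Asg C → ℝ) (X : V) (c : Asg (Pre B.edges X))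

def outerFactor (f : V → Bool) : ℝ :=
  if Agrees f (Pre B.edges X) c then
    B.ι (fun x => f x.1) * γ (fun x => f x.1) *
      ∏ z ∈ cptNodes B C \ insert X (descendantsOff B.edges C X), copyProb B z (f z) f
  else 0

variable {B C X}

theorem dependsOn_outerFactor (hC : IsCutset B.edges C) (hXI : X ∉ InitSet B.edges)
    (hXC : X ∉ C) :
    DependsOn (outerFactor B C γ X c) (↑(insert X (descendantsOff B.edges C X)))ᶜ :=
  fun f f' h => by
    have hT := insert_descendantsOff_subset_cptNodes B hXI hXC
    have hoff : ∀ U : Finset V, (∀ y ∈ U, y ∉ insert X (descendantsOff B.edges C X)) →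
        (fun x : {x // x ∈ U} => f x.1) = fun x => f' x.1 :=
      fun U hU => funext fun x => h x (hU x x.2)
    simp only [outerFactor, agrees_iff, dependsOn_prod_copyProb_sdiff_descendantsOff B C X h,
      hoff _ fun y hy => hC.parent_notMem_insert_descendantsOff hXC hy,
      hoff _ fun y hy hyT => (mem_cptNodes.1 (hT hyT)).1 hy,
      hoff _ fun y hy hyT => (mem_cptNodes.1 (hT hyT)).2 hy]

theorem extend_eq_outerFactor_mul (hXI : X ∉ InitSet B.edges) (hXC : X ∉ C) {f : V → Bool}
    (h : Agrees f (Pre B.edges X) c) :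
    Extend B C γ f = outerFactor B C γ X c f *
      ∏ z ∈ insert X (descendantsOff B.edges C X), copyProb B z (f z) f := by
  rw [outerFactor, if_pos h, extend_apply,
    ← Finset.prod_sdiff (insert_descendantsOff_subset_cptNodes B hXI hXC)]
  ring

theorem outerFactor_of_not_agrees {f : V → Bool} (h : ¬Agrees f (Pre B.edges X) c) :
    outerFactor B C γ X c f = 0 :=
  if_neg h

theorem probIf_agrees_extend (hXI : X ∉ InitSet B.edges) (hXC : X ∉ C) :
    probIf (Extend B C γ) (fun f => Agrees f (Pre B.edges X) c) =
      ∑ f, outerFactor B C γ X c f *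
        ∏ z ∈ insert X (descendantsOff B.edges C X), copyProb B z (f z) f := by
  refine Finset.sum_congr rfl fun f _ => ?_
  by_cases h : Agrees f (Pre B.edges X) c
  · rw [if_pos h, extend_eq_outerFactor_mul γ c hXI hXC h]
  · rw [if_neg h, outerFactor_of_not_agrees γ c h, zero_mul]

theorem probIf_true_agrees_extend (hC : IsCutset B.edges C) (hXI : X ∉ InitSet B.edges)
    (hXC : X ∉ C) :
    probIf (Extend B C γ) (fun f => f X = true ∧ Agrees f (Pre B.edges X) c) =
      ∑ f, (if f X = true then B.cpt X c * outerFactor B C γ X c f else 0) *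
        ∏ z ∈ descendantsOff B.edges C X, copyProb B z (f z) f := by
  refine Finset.sum_congr rfl fun f _ => ?_
  by_cases h : Agrees f (Pre B.edges X) c
  · by_cases hfX : f X = true
    · rw [if_pos ⟨hfX, h⟩, if_pos hfX, extend_eq_outerFactor_mul γ c hXI hXC h,
        Finset.prod_insert (hC.notMem_descendantsOff hXC), hfX, copyProb_true_of_agrees B h]
      ring
    · rw [if_neg fun h' => hfX h'.1, if_neg hfX, zero_mul]
  · rw [if_neg fun h' => h h'.2, outerFactor_of_not_agrees γ c h, mul_zero, ite_self, zero_mul]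

theorem strongCPT_extend (hC : IsCutset B.edges C) (hXI : X ∉ InitSet B.edges) (hXC : X ∉ C) :
    StrongCPT B (Extend B C γ) X := by
  intro c
  set D := descendantsOff B.edges C X
  have hXD : X ∉ D := hC.notMem_descendantsOff hXC
  have hg : DependsOn (outerFactor B C γ X c) (↑(insert X D))ᶜ :=
    dependsOn_outerFactor γ c hC hXI hXC
  have hnum : DependsOn (fun f => if f X = true then B.cpt X c * outerFactor B C γ X c f
      else 0) (↑D)ᶜ := fun f f' h => by
    simp only [h X hXD, hg fun y hy => h y fun hyD => hy (Finset.mem_insert_of_mem hyD)]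
  rw [probIf_true_agrees_extend γ c hC hXI hXC, probIf_agrees_extend γ c hXI hXC,
    hC.sum_mul_prod_copyProb B (fun _ => notMem_of_mem_descendantsOff) hnum,
    hC.sum_mul_prod_copyProb B (fun y hy => (mem_cptNodes.1
      (insert_descendantsOff_subset_cptNodes B hXI hXC hy)).2) hg, Finset.sum_mul]
  refine Finset.sum_congr rfl fun f _ => ?_
  simp only [Finset.forall_mem_insert]
  by_cases hD : ∀ y ∈ D, f y = true
  · by_cases hfX : f X = true
    · rw [if_pos hD, if_pos hfX, if_pos ⟨hfX, hD⟩, mul_comm]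
    · rw [if_pos hD, if_neg hfX, if_neg fun h => hfX h.1, zero_mul]
  · rw [if_neg hD, if_neg fun h => hD h.2, zero_mul]

end StrongConsistency

end Networks

/-- For a GBN `B` with cutset `C` and `μ ∈ [B]_{MC-C}`, `μ` is
strongly CPT-consistent for every (non-initial) node in `V∖C` and weakly
CPT-consistent for every (non-initial) node in `C`. -/
theorem stmt13 {V : Type} [Fintype V] [DecidableEq V]
    (B : GBN V) (C : Finset V) (hC : IsCutset B.edges C)
    (μ : (V → Bool) → ℝ) (hμ : μ ∈ MCStatSem B C) :
    (∀ X, X ∉ InitSet B.edges → X ∉ C → StrongCPT B μ X) ∧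
    (∀ X, X ∉ InitSet B.edges → X ∈ C → WeakCPT B μ X) := by
  obtain ⟨γ, hγ, hstat, rfl⟩ := hμ
  exact ⟨fun X hXI hXC => strongCPT_extend γ hC hXI hXC,
    fun X _ hXC => weakCPT_extend B hC hγ.1 hstat hXC⟩

end GBNPaper
end
end
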